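/- (Lemma 6, degree-fluctuation event.) Suppose n·p·s² ≥ 128·log n. There exists N such that for all n ≥ N and any two vertices u, v ∈ [n]: P( {a_u − a_v ≤ τ} ∪ {b_v − b_u ≤ τ} ) ≥ 1 − n^{−7/2}, where τ = 2·√(10·n·p·s·(1−s)·log n) + 5·log n. -/

import Mathlib

/-!
Put `D = (a_u - a_v) + (b_v - b_u)`; outside the event, `D > 2τ`. Counting degrees edge by edge,
`D = ∑_e c_e (X_e S_e - X_e T_e)` with `c_e = 1[u ∈ e] - 1[v ∈ e]` (the edge `uv` cancels), a sum
of independent terms, at most `2n` of them nonzero, each `±1` with probability `p s (1 - s)` and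
`0` otherwise. For `|y| ≤ 1` such a term has moment generating function at most
`exp (2 p s (1 - s) y²)`, so Chernoff gives `P(D ≥ 2τ) ≤ exp (4 n p s (1 - s) θ² - 2θτ)` for
`0 ≤ θ ≤ 1`, and `θ = min 1 √(log n / (n p s (1 - s)))` makes this at most `n^(-7/2)`.
-/

open scoped Classical
open Finset

namespace SeededGraphMatching

/-- Sample space of the correlated Erdős–Rényi model `𝒢(n,p;s)`: for each unordered pair
`e` of vertices there is a triple `(X_e, S_e, T_e)` of Booleans. -/
abbrev ESpace (n : ℕ) := Sym2 (Fin n) → Bool × Bool × Bool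

/-- Probability weight of a single triple: `X_e ~ Bern(p)`, `S_e ~ Bern(s)`, `T_e ~ Bern(s)`,
all independent. -/
noncomputable def wt (p s : ℝ) (b : Bool × Bool × Bool) : ℝ :=
  (if b.1 then p else 1 - p) * (if b.2.1 then s else 1 - s) * (if b.2.2 then s else 1 - s)

/-- Probability of an elementary outcome (product of independent Bernoullis). -/
noncomputable def prOmega (n : ℕ) (p s : ℝ) (ω : ESpace n) : ℝ :=
  ∏ e : Sym2 (Fin n), wt p s (ω e)

/-- Probability of an event. -/
noncomputable def Pr (n : ℕ) (p s : ℝ) (E : Set (ESpace n)) : ℝ :=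
  ∑ ω : ESpace n, E.indicator (prOmega n p s) ω

/-- `G1` contains the edge `e = {i,j}` (for `i ≠ j`) iff `X_e = 1` and `S_e = 1`. -/
def G1 (n : ℕ) (ω : ESpace n) : SimpleGraph (Fin n) where
  Adj i j := i ≠ j ∧ (ω s(i, j)).1 = true ∧ (ω s(i, j)).2.1 = true
  symm := by
    constructor
    intro i j h
    refine ⟨h.1.symm, ?_, ?_⟩
    · rw [Sym2.eq_swap]; exact h.2.1
    · rw [Sym2.eq_swap]; exact h.2.2
  loopless := ⟨fun i h => h.1 rfl⟩

/-- `G2` contains the edge `e = {i,j}` (for `i ≠ j`) iff `X_e = 1` and `T_e = 1`. -/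
def G2 (n : ℕ) (ω : ESpace n) : SimpleGraph (Fin n) where
  Adj i j := i ≠ j ∧ (ω s(i, j)).1 = true ∧ (ω s(i, j)).2.2 = true
  symm := by
    constructor
    intro i j h
    refine ⟨h.1.symm, ?_, ?_⟩
    · rw [Sym2.eq_swap]; exact h.2.1
    · rw [Sym2.eq_swap]; exact h.2.2
  loopless := ⟨fun i h => h.1 rfl⟩

/-- Number of fixed points of the seed permutation `π`. -/
def fixedCount (n : ℕ) (π : Equiv.Perm (Fin n)) : ℕ :=
  (univ.filter fun i => π i = i).card

/-- The (random) neighborhood of `u` in `G1`, as a finite set. -/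
noncomputable def nbr1 (n : ℕ) (ω : ESpace n) (u : Fin n) : Finset (Fin n) :=
  univ.filter fun i => (G1 n ω).Adj u i

/-- The (random) neighborhood of `u` in `G2`, as a finite set. -/
noncomputable def nbr2 (n : ℕ) (ω : ESpace n) (u : Fin n) : Finset (Fin n) :=
  univ.filter fun i => (G2 n ω).Adj u i

open Real

section Chernoff

variable {Ω : Type*} [Fintype Ω]

theorem sum_indicator_eq_one_sub_sum_indicator_compl {μ : Ω → ℝ} (hμ : ∑ ω, μ ω = 1)
    (E : Set Ω) : ∑ ω, E.indicator μ ω = 1 - ∑ ω, Eᶜ.indicator μ ω := by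
  rw [eq_sub_iff_add_eq, ← Finset.sum_add_distrib, ← hμ]
  exact Finset.sum_congr rfl fun ω _ => congrFun (Set.indicator_self_add_compl E μ) ω

variable {ι β : Type*} [Fintype ι] [DecidableEq ι] [Fintype β]

theorem sum_prod_eq_one {w : ι → β → ℝ} (hw : ∀ i, ∑ b, w i b = 1) :
    ∑ ω : ι → β, ∏ i, w i (ω i) = 1 := by
  simp [← Fintype.prod_sum, hw]

theorem sum_indicator_le_exp_mul_prod_sum {w : ι → β → ℝ} (hw : ∀ i b, 0 ≤ w i b)
    (f : ι → β → ℝ) {θ : ℝ} (hθ : 0 ≤ θ) (t : ℝ) :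
    ∑ ω : ι → β, {ω | t ≤ ∑ i, f i (ω i)}.indicator (fun ω => ∏ i, w i (ω i)) ω
      ≤ exp (-(θ * t)) * ∏ i, ∑ b, w i b * exp (θ * f i b) := by
  have markov : ∀ ω : ι → β,
      {ω | t ≤ ∑ i, f i (ω i)}.indicator (fun ω => ∏ i, w i (ω i)) ω
        ≤ exp (-(θ * t)) * ∏ i, w i (ω i) * exp (θ * f i (ω i)) := by
    intro ω
    rw [prod_mul_distrib, ← exp_sum, mul_left_comm, ← exp_add, ← mul_sum]
    have hw₀ : 0 ≤ ∏ i, w i (ω i) := prod_nonneg fun i _ => hw i (ω i)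
    by_cases h : t ≤ ∑ i, f i (ω i)
    · rw [Set.indicator_of_mem (show ω ∈ {ω | t ≤ ∑ i, f i (ω i)} from h)]
      exact le_mul_of_one_le_right hw₀ (one_le_exp (by nlinarith))
    · rw [Set.indicator_of_notMem (show ω ∉ {ω | t ≤ ∑ i, f i (ω i)} from h)]
      positivity
  calc _ ≤ ∑ ω : ι → β, exp (-(θ * t)) * ∏ i, w i (ω i) * exp (θ * f i (ω i)) :=
        sum_le_sum fun ω _ => markov ω
    _ = _ := by rw [← mul_sum, Fintype.prod_sum]

end Chernoff

theorem exp_add_exp_neg_le {y : ℝ} (hy : |y| ≤ 1) : exp y + exp (-y) ≤ 2 + 2 * y ^ 2 := by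
  have h₁ := (abs_le.1 (abs_exp_sub_one_sub_id_le hy)).2
  have h₂ := (abs_le.1 (abs_exp_sub_one_sub_id_le (x := -y) (by rwa [abs_neg]))).2
  nlinarith

section Incidence

variable {V : Type*} [DecidableEq V]

noncomputable def inc (u : V) (e : Sym2 V) : ℝ :=
  if u ∈ e ∧ ¬e.IsDiag then 1 else 0

theorem abs_inc_sub_inc_le_one (u v : V) (e : Sym2 V) : |inc u e - inc v e| ≤ 1 := by
  unfold inc; split_ifs <;> norm_num

variable [Fintype V]

theorem card_filter_adj_eq_sum_inc (G : SimpleGraph V) [DecidableRel G.Adj]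
    (P : Sym2 V → Prop) [DecidablePred P] (hG : ∀ e, ¬e.IsDiag → (e ∈ G.edgeSet ↔ P e))
    (u : V) : ((univ.filter (G.Adj u)).card : ℝ) = ∑ e, inc u e * if P e then 1 else 0 := by
  rw [← G.neighborFinset_eq_filter, G.card_neighborFinset_eq_degree,
    ← G.card_incidenceFinset_eq_degree, ← filter_univ_mem (G.incidenceFinset u),
    natCast_card_filter]
  refine sum_congr rfl fun e _ => ?_
  by_cases he : e.IsDiag
  · simp [inc, he, SimpleGraph.incidenceSet]
  · simp [inc, he, SimpleGraph.incidenceSet, hG e he, ite_and]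

theorem sum_inc_le (u : V) : ∑ e, inc u e ≤ Fintype.card V := by
  have h := card_filter_adj_eq_sum_inc (⊤ : SimpleGraph V) (fun _ => True) (by simp) u
  simp only [if_true, mul_one] at h
  rw [← h]
  exact_mod_cast card_le_univ _

theorem sum_sq_inc_sub_inc_le (u v : V) :
    ∑ e, (inc u e - inc v e) ^ 2 ≤ 2 * Fintype.card V := by
  calc ∑ e, (inc u e - inc v e) ^ 2 ≤ ∑ e, (inc u e + inc v e) :=
        sum_le_sum fun e _ => by unfold inc; split_ifs <;> norm_num
    _ ≤ 2 * Fintype.card V := by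
        rw [sum_add_distrib]; linarith [sum_inc_le u, sum_inc_le v]

end Incidence

noncomputable def edgeDiff (b : Bool × Bool × Bool) : ℝ :=
  (if b.1 ∧ b.2.1 then 1 else 0) - (if b.1 ∧ b.2.2 then 1 else 0)

theorem wt_nonneg {p s : ℝ} (hp₀ : 0 ≤ p) (hp₁ : p ≤ 1) (hs₀ : 0 ≤ s) (hs₁ : s ≤ 1)
    (b : Bool × Bool × Bool) : 0 ≤ wt p s b := by
  unfold wt
  split_ifs <;> apply mul_nonneg <;> try apply mul_nonneg
  all_goals linarith

theorem sum_wt (p s : ℝ) : ∑ b, wt p s b = 1 := by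
  simp [wt, Fintype.sum_prod_type]; ring

theorem sum_wt_mul_exp_edgeDiff (p s y : ℝ) :
    ∑ b, wt p s b * exp (y * edgeDiff b) = 1 + p * s * (1 - s) * (exp y + exp (-y) - 2) := by
  simp [wt, edgeDiff, Fintype.sum_prod_type]; ring

theorem sum_wt_mul_exp_edgeDiff_le {p s y : ℝ} (hp : 0 ≤ p) (hs₀ : 0 ≤ s) (hs₁ : s ≤ 1)
    (hy : |y| ≤ 1) : ∑ b, wt p s b * exp (y * edgeDiff b) ≤ exp (2 * (p * s * (1 - s)) * y ^ 2) := by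
  have hq : 0 ≤ p * s * (1 - s) := mul_nonneg (mul_nonneg hp hs₀) (by linarith)
  calc _ = 1 + p * s * (1 - s) * (exp y + exp (-y) - 2) := sum_wt_mul_exp_edgeDiff p s y
    _ ≤ 2 * (p * s * (1 - s)) * y ^ 2 + 1 := by nlinarith [exp_add_exp_neg_le hy]
    _ ≤ _ := add_one_le_exp _

theorem mem_edgeSet_G1_iff {n : ℕ} (ω : ESpace n) (e : Sym2 (Fin n)) (he : ¬e.IsDiag) :
    e ∈ (G1 n ω).edgeSet ↔ (ω e).1 ∧ (ω e).2.1 := by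
  induction e using Sym2.ind with
  | _ i j => simpa [G1] using fun _ _ => he

theorem mem_edgeSet_G2_iff {n : ℕ} (ω : ESpace n) (e : Sym2 (Fin n)) (he : ¬e.IsDiag) :
    e ∈ (G2 n ω).edgeSet ↔ (ω e).1 ∧ (ω e).2.2 := by
  induction e using Sym2.ind with
  | _ i j => simpa [G2] using fun _ _ => he

theorem degree_imbalance_eq_sum {n : ℕ} (ω : ESpace n) (u v : Fin n) :
    ((nbr1 n ω u).card - (nbr1 n ω v).card : ℝ) + ((nbr2 n ω v).card - (nbr2 n ω u).card)
      = ∑ e, (inc u e - inc v e) * edgeDiff (ω e) := by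
  simp only [nbr1, nbr2, card_filter_adj_eq_sum_inc _ _ (mem_edgeSet_G1_iff ω),
    card_filter_adj_eq_sum_inc _ _ (mem_edgeSet_G2_iff ω), ← sum_sub_distrib, ← sum_add_distrib]
  exact sum_congr rfl fun e _ => by unfold edgeDiff; ring

theorem Pr_sum_inc_mul_edgeDiff_ge_le_exp {n : ℕ} {p s θ : ℝ} (hp₀ : 0 ≤ p) (hp₁ : p ≤ 1)
    (hs₀ : 0 ≤ s) (hs₁ : s ≤ 1) (hθ₀ : 0 ≤ θ) (hθ₁ : θ ≤ 1) (u v : Fin n) (t : ℝ) :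
    Pr n p s {ω | t ≤ ∑ e, (inc u e - inc v e) * edgeDiff (ω e)}
      ≤ exp (4 * (n * (p * s * (1 - s))) * θ ^ 2 - θ * t) := by
  set c : Sym2 (Fin n) → ℝ := fun e => inc u e - inc v e
  set q := p * s * (1 - s)
  have hq : 0 ≤ q := mul_nonneg (mul_nonneg hp₀ hs₀) (by linarith)
  have hedge : ∀ e, ∑ b, wt p s b * exp (θ * (c e * edgeDiff b)) ≤ exp (2 * q * (θ * c e) ^ 2) :=
    fun e => by
      simp_rw [← mul_assoc]
      refine sum_wt_mul_exp_edgeDiff_le hp₀ hs₀ hs₁ ?_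
      rw [abs_mul, abs_of_nonneg hθ₀]
      nlinarith [abs_inc_sub_inc_le_one u v e, abs_nonneg (c e)]
  have hvar : ∑ e, 2 * q * (θ * c e) ^ 2 ≤ 4 * (n * q) * θ ^ 2 := by
    have := sum_sq_inc_sub_inc_le u v
    simp only [Fintype.card_fin] at this
    calc ∑ e, 2 * q * (θ * c e) ^ 2 = 2 * q * θ ^ 2 * ∑ e, c e ^ 2 := by
          rw [mul_sum]; exact sum_congr rfl fun e _ => by ring
      _ ≤ 2 * q * θ ^ 2 * (2 * n) := by gcongr
      _ = _ := by ring
  calc Pr n p s {ω | t ≤ ∑ e, c e * edgeDiff (ω e)}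
      = ∑ ω : ESpace n, {ω | t ≤ ∑ e, c e * edgeDiff (ω e)}.indicator
          (fun ω => ∏ e, wt p s (ω e)) ω := rfl
    _ ≤ exp (-(θ * t)) * ∏ e, ∑ b, wt p s b * exp (θ * (c e * edgeDiff b)) :=
        sum_indicator_le_exp_mul_prod_sum (w := fun _ => wt p s) (fun _ => wt_nonneg hp₀ hp₁ hs₀ hs₁)
          (fun e b => c e * edgeDiff b) hθ₀ t
    _ ≤ exp (-(θ * t)) * ∏ e, exp (2 * q * (θ * c e) ^ 2) := by
        gcongr with e
        · exact fun e _ => sum_nonneg fun b _ => mul_nonneg (wt_nonneg hp₀ hp₁ hs₀ hs₁ b) (exp_nonneg _)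
        · exact hedge e
    _ ≤ exp (-(θ * t)) * exp (4 * (n * q) * θ ^ 2) := by
        rw [← exp_sum]; gcongr
    _ = _ := by rw [← exp_add]; ring_nf

theorem exists_chernoff_param {A L : ℝ} (hL : 0 < L) :
    ∃ θ : ℝ, 0 ≤ θ ∧ θ ≤ 1 ∧
      4 * A * θ ^ 2 - θ * (2 * (2 * √(10 * A * L) + 5 * L)) ≤ -(7 / 2) * L := by
  rcases le_or_gt A L with hAL | hAL
  · exact ⟨1, zero_le_one, le_rfl, by nlinarith [sqrt_nonneg (10 * A * L)]⟩
  have hA₀ : 0 < A := hL.trans hAL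
  set θ := √(L / A)
  have hAθ : A * θ ^ 2 = L := by
    rw [sq_sqrt (by positivity)]; field_simp
  have hθ : θ * √(10 * A * L) = √10 * L := by
    rw [← sqrt_mul (by positivity), show L / A * (10 * A * L) = 10 * L ^ 2 by field_simp,
      sqrt_mul (by norm_num), sqrt_sq hL.le]
  have h10 : 3 ≤ √10 := le_sqrt_of_sq_le (by norm_num)
  refine ⟨θ, sqrt_nonneg _, sqrt_le_one.mpr ((div_le_one hA₀).2 hAL.le), ?_⟩
  nlinarith [mul_nonneg (sqrt_nonneg (L / A)) hL.le]

/-- Lemma 6: degree-fluctuation event. -/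
theorem degree_fluctuation :
    ∃ N : ℕ, ∀ n : ℕ, N ≤ n →
      ∀ p s : ℝ, p ∈ Set.Ioo (0 : ℝ) 1 → s ∈ Set.Ioc (0 : ℝ) 1 →
        (n : ℝ) * p * s ^ 2 ≥ 128 * Real.log n →
        ∀ u v : Fin n,
          Pr n p s {ω |
              ((nbr1 n ω u).card : ℝ) - ((nbr1 n ω v).card : ℝ)
                  ≤ 2 * Real.sqrt (10 * (n : ℝ) * p * s * (1 - s) * Real.log n)
                    + 5 * Real.log n ∨
              ((nbr2 n ω v).card : ℝ) - ((nbr2 n ω u).card : ℝ)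
                  ≤ 2 * Real.sqrt (10 * (n : ℝ) * p * s * (1 - s) * Real.log n)
                    + 5 * Real.log n}
            ≥ 1 - (n : ℝ) ^ (-(7 / 2 : ℝ)) := by
  refine ⟨2, fun n hn p s ⟨hp₀, hp₁⟩ ⟨hs₀, hs₁⟩ _ u v => ?_⟩
  have hL : 0 < log n := log_pos (by exact_mod_cast hn)
  obtain ⟨θ, hθ₀, hθ₁, hθ⟩ := exists_chernoff_param (A := n * (p * s * (1 - s))) hL
  rw [show 10 * (n * (p * s * (1 - s))) * log n = 10 * (n : ℝ) * p * s * (1 - s) * log n by ring]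
    at hθ
  set τ := 2 * √(10 * (n : ℝ) * p * s * (1 - s) * log n) + 5 * log n
  set E : Set (ESpace n) := {ω | ((nbr1 n ω u).card : ℝ) - (nbr1 n ω v).card ≤ τ ∨
    ((nbr2 n ω v).card : ℝ) - (nbr2 n ω u).card ≤ τ}
  have hEc : Eᶜ ⊆ {ω | 2 * τ ≤ ∑ e, (inc u e - inc v e) * edgeDiff (ω e)} := fun ω hω => by
    simp only [E, Set.mem_compl_iff, Set.mem_ofPred_eq, not_or, not_le] at hω ⊢
    linarith [degree_imbalance_eq_sum ω u v]
  have hPr_Ec : Pr n p s Eᶜ ≤ (n : ℝ) ^ (-(7 / 2 : ℝ)) := calc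
    Pr n p s Eᶜ ≤ Pr n p s {ω | 2 * τ ≤ ∑ e, (inc u e - inc v e) * edgeDiff (ω e)} :=
      sum_le_sum fun ω _ => Set.indicator_le_indicator_of_subset hEc
        (fun ω => prod_nonneg fun e _ => wt_nonneg hp₀.le hp₁.le hs₀.le hs₁ (ω e)) ω
    _ ≤ exp (4 * (n * (p * s * (1 - s))) * θ ^ 2 - θ * (2 * τ)) :=
      Pr_sum_inc_mul_edgeDiff_ge_le_exp hp₀.le hp₁.le hs₀.le hs₁ hθ₀ hθ₁ u v _
    _ ≤ exp (-(7 / 2) * log n) := exp_le_exp.2 (by linarith)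
    _ = _ := by rw [rpow_def_of_pos (by positivity), mul_comm]
  have hE : Pr n p s E = 1 - Pr n p s Eᶜ :=
    sum_indicator_eq_one_sub_sum_indicator_compl (sum_prod_eq_one fun _ => sum_wt p s) E
  linarith

end SeededGraphMatching
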